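/- arXiv:2605.11238 — 2 statements merged into one kernel-verified Lean document; each statement's English description precedes it below -/
import Mathlib

section
/- For every integer i with 0 ≤ i ≤ k ≤ n, one has (k^k / n^k) · C(n,i) ≤ k^i / i!. -/
theorem div_pow_le_div_pow_of_le {α : Type*} [Semifield α] [LinearOrder α] [IsStrictOrderedRing α]
    {x y : α} {i k : ℕ} (hx : 0 ≤ x) (hxy : x ≤ y) (hik : i ≤ k) :
    x ^ k / y ^ k ≤ x ^ i / y ^ i := by
  rw [← div_pow, ← div_pow]
  exact pow_le_pow_of_le_one (div_nonneg hx (hx.trans hxy)) (div_le_one_of_le₀ hxy (hx.trans hxy)) hik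

/-- For `0 ≤ i ≤ k ≤ n`, `(k^k / n^k) · C(n,i) ≤ k^i / i!`. -/
theorem binom_key_step (n k i : ℕ) (hik : i ≤ k) (hkn : k ≤ n) :
    ((k : ℝ) ^ k / (n : ℝ) ^ k) * (n.choose i : ℝ) ≤ (k : ℝ) ^ i / (i.factorial : ℝ) := by
  have hkn' : (k : ℝ) ≤ n := by exact_mod_cast hkn
  -- lets `k ^ i / n ^ i * n ^ i = k ^ i` go through also when `n = 0`
  have hk_of_hn : (n : ℝ) = 0 → (k : ℝ) = 0 := fun hn => le_antisymm (hn ▸ hkn') k.cast_nonneg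
  calc ((k : ℝ) ^ k / (n : ℝ) ^ k) * (n.choose i : ℝ)
      ≤ ((k : ℝ) ^ i / (n : ℝ) ^ i) * ((n : ℝ) ^ i / i.factorial) := by
        gcongr ?_ * ?_
        · exact div_pow_le_div_pow_of_le k.cast_nonneg hkn' hik
        · exact Nat.choose_le_pow_div i n
    _ = (k : ℝ) ^ i / (i.factorial : ℝ) := by
        rw [← div_pow, mul_div_assoc', ← mul_pow, div_mul_cancel_of_imp hk_of_hn]
end

section
/- Let K ⊆ ℝ^d be orthosymmetric and quadratically convex (a QCO set). Then its Minkowski gauge ρ_K is exactly 2-convex: for any vectors x₁,…,x_m ∈ ℝ^d, ρ_K( (∑_{i=1}^m x_i²)^{1/2} ) ≤ ( ∑_{i=1}^m ρ_K(x_i)² )^{1/2}, where x² and square root are taken entrywise. -/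
/-- `K` is orthosymmetric: closed under entrywise sign flips. -/
def Orthosymmetric {d : ℕ} (K : Set (Fin d → ℝ)) : Prop :=
  ∀ θ ∈ K, ∀ η : Fin d → ℝ, (∀ i, η i = 1 ∨ η i = -1) → (fun i => η i * θ i) ∈ K

/-- `K` is quadratically convex: the set of entrywise squares of elements of `K` is convex. -/
def QuadraticallyConvex {d : ℕ} (K : Set (Fin d → ℝ)) : Prop :=
  Convex ℝ ((fun θ : Fin d → ℝ => fun i => θ i ^ 2) '' K)

open Pointwise

section Aux

variable {d : ℕ} {K : Set (Fin d → ℝ)}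

/-- A convex orthosymmetric set is "solid": it is closed under entrywise
domination in absolute value. -/
lemma solid_mem (hconv : Convex ℝ K) (horth : Orthosymmetric K)
    {u v : Fin d → ℝ} (hv : v ∈ K) (h : ∀ i, |u i| ≤ |v i|) : u ∈ K := by
  have key : ∀ s : Finset (Fin d), (fun i => if i ∈ s then u i else v i) ∈ K := by
    intro s
    induction s using Finset.induction with
    | empty => simpa using hv
    | @insert i₀ s hi ih =>
      set w : Fin d → ℝ := fun i => if i ∈ s then u i else v i with hw
      set t : ℝ := if v i₀ = 0 then 0 else u i₀ / v i₀ with ht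
      have hut : u i₀ = t * v i₀ := by
        by_cases h0 : v i₀ = 0
        · have : |u i₀| ≤ 0 := by simpa [h0] using h i₀
          have : u i₀ = 0 := by
            have := abs_nonneg (u i₀); have h2 := abs_eq_zero.mp (le_antisymm ‹|u i₀| ≤ 0› this)
            exact h2
          simp [ht, h0, this]
        · simp [ht, h0, div_mul_cancel₀]
      have htabs : |t| ≤ 1 := by
        by_cases h0 : v i₀ = 0
        · simp [ht, h0]
        · rw [ht, if_neg h0, abs_div]
          rw [div_le_one (by positivity)]
          exact h i₀
      have ha : (0:ℝ) ≤ (1 + t) / 2 := by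
        have := neg_le_of_abs_le htabs; linarith
      have hb : (0:ℝ) ≤ (1 - t) / 2 := by
        have := le_of_abs_le htabs; linarith
      have hab : (1 + t) / 2 + (1 - t) / 2 = 1 := by ring
      set η : Fin d → ℝ := fun j => if j = i₀ then -1 else 1 with hη
      have hflip : (fun j => η j * w j) ∈ K :=
        horth w ih η (fun j => by by_cases hj : j = i₀ <;> simp [hη, hj])
      have hmem := hconv ih hflip ha hb hab
      convert hmem using 1
      funext j
      by_cases hj : j = i₀
      · subst hj
        have hwj : w j = v j := by simp [hw, hi]
        simp only [Finset.mem_insert, true_or, if_pos, Pi.add_apply, Pi.smul_apply,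
          smul_eq_mul, hη, if_pos rfl]
        rw [hwj, hut]; ring
      · have : η j = 1 := by simp [hη, hj]
        simp only [Finset.mem_insert, hj, false_or, Pi.add_apply, Pi.smul_apply,
          smul_eq_mul, this, one_mul]
        by_cases hjs : j ∈ s <;> simp [hw, hjs] <;> ring
  have := key Finset.univ
  simpa using this

lemma mem_smul_mono (hconv : Convex ℝ K) (h0 : (0 : Fin d → ℝ) ∈ K)
    {x : Fin d → ℝ} {a b : ℝ} (ha : 0 < a) (hab : a ≤ b) (hx : x ∈ a • K) :
    x ∈ b • K := by
  obtain ⟨θ, hθ, rfl⟩ := hx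
  have hb : 0 < b := ha.trans_le hab
  have h1 : (a / b) • θ + (1 - a / b) • (0 : Fin d → ℝ) ∈ K :=
    hconv hθ h0 (by positivity) (by
      rw [sub_nonneg, div_le_one hb]; exact hab) (by ring)
  rw [smul_zero, add_zero] at h1
  exact ⟨(a / b) • θ, h1, by show b • ((a / b) • θ) = a • θ; rw [smul_smul, mul_div_cancel₀ _ hb.ne']⟩

lemma key_ineq (hconv : Convex ℝ K) (horth : Orthosymmetric K)
    (hquad : QuadraticallyConvex K) {m : ℕ} (hm : 0 < m)
    (x : Fin m → Fin d → ℝ) (r : Fin m → ℝ) (hr : ∀ j, 0 < r j)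
    (hx : ∀ j, x j ∈ r j • K) :
    gauge K (fun i => Real.sqrt (∑ j, x j i ^ 2)) ≤ Real.sqrt (∑ j, r j ^ 2) := by
  choose θ hθK hθx using hx
  set S : ℝ := ∑ j, r j ^ 2 with hS
  have hSpos : 0 < S := Finset.sum_pos (fun j _ => pow_pos (hr j) 2)
    (Finset.univ_nonempty_iff.mpr (Fin.pos_iff_nonempty.mp hm))
  -- convex combination in K²
  have hmem : ∑ j, (r j ^ 2 / S) • (fun i => θ j i ^ 2) ∈
      ((fun θ : Fin d → ℝ => fun i => θ i ^ 2) '' K) := by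
    apply hquad.sum_mem (fun j _ => by positivity)
    · rw [← Finset.sum_div, ← hS, div_self hSpos.ne']
    · exact fun j _ => ⟨θ j, hθK j, rfl⟩
  obtain ⟨σ, hσK, hσ⟩ := hmem
  have habs : (fun i => |σ i|) ∈ K := by
    have := horth σ hσK (fun i => if σ i < 0 then -1 else 1)
      (fun i => by by_cases h : σ i < 0 <;> simp [h])
    convert this using 1
    funext i
    by_cases h : σ i < 0
    · simp [h, abs_of_neg h]
    · simp [h, abs_of_nonneg (not_lt.mp h)]
  have hσi : ∀ i, σ i ^ 2 = ∑ j, r j ^ 2 / S * θ j i ^ 2 := by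
    intro i
    have := congrFun hσ i
    simpa [Finset.sum_apply] using this
  have hkey : (fun i => Real.sqrt (∑ j, x j i ^ 2)) =
      Real.sqrt S • (fun i => |σ i|) := by
    funext i
    have hx2 : ∀ j, x j i ^ 2 = r j ^ 2 * θ j i ^ 2 := by
      intro j
      have := congrFun (hθx j) i
      simp only [Pi.smul_apply, smul_eq_mul] at this
      rw [← this]; ring
    have h1 : (∑ j, x j i ^ 2) = S * σ i ^ 2 := by
      rw [hσi i, Finset.mul_sum]
      refine Finset.sum_congr rfl fun j _ => ?_
      rw [hx2 j]
      field_simp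
    simp only [Pi.smul_apply, smul_eq_mul]
    rw [h1, Real.sqrt_mul hSpos.le, Real.sqrt_sq_eq_abs]
  rw [hkey]
  exact gauge_le_of_mem (Real.sqrt_nonneg _) (Set.smul_mem_smul_set habs)

end Aux

/-- The Minkowski gauge of a QCO set is exactly 2-convex:
`ρ_K((∑ x_i²)^{1/2}) ≤ (∑ ρ_K(x_i)²)^{1/2}` with entrywise square and square root. -/
theorem qco_gauge_exact_two_convex {d : ℕ} (K : Set (Fin d → ℝ))
    (hconv : Convex ℝ K) (horth : Orthosymmetric K) (hquad : QuadraticallyConvex K)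
    (m : ℕ) (x : Fin m → Fin d → ℝ) :
    gauge K (fun i => Real.sqrt (∑ j, x j i ^ 2)) ≤
      Real.sqrt (∑ j, gauge K (x j) ^ 2) := by
  rcases Nat.eq_zero_or_pos m with hm | hm
  · subst hm
    have hz : (fun i => Real.sqrt (∑ j : Fin 0, x j i ^ 2)) = (0 : Fin d → ℝ) := by
      funext i; simp
    rw [hz, gauge_zero]
    positivity
  set y : Fin d → ℝ := fun i => Real.sqrt (∑ j, x j i ^ 2) with hy
  by_cases hyne : ∃ r : ℝ, 0 < r ∧ y ∈ r • K
  · obtain ⟨r₀, hr₀, hy₀⟩ := hyne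
    obtain ⟨θ₀, hθ₀K, hθ₀⟩ := hy₀
    have h0K : (0 : Fin d → ℝ) ∈ K :=
      solid_mem hconv horth hθ₀K (fun i => by simp)
    have hθ₀i : ∀ i, r₀ * θ₀ i = y i := by
      intro i
      have := congrFun hθ₀ i
      simpa using this
    have hθ₀nn : ∀ i, 0 ≤ θ₀ i := by
      intro i
      have h1 : 0 ≤ y i := Real.sqrt_nonneg _
      nlinarith [hθ₀i i]
    have hxj : ∀ j, x j ∈ r₀ • K := by
      intro j
      refine ⟨r₀⁻¹ • x j, ?_, by show r₀ • (r₀⁻¹ • x j) = x j; rw [smul_inv_smul₀ hr₀.ne']⟩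
      apply solid_mem hconv horth hθ₀K
      intro i
      have h1 : |x j i| ≤ y i := by
        rw [hy, ← Real.sqrt_sq_eq_abs]
        exact Real.sqrt_le_sqrt
          (Finset.single_le_sum (fun j' _ => sq_nonneg (x j' i)) (Finset.mem_univ j))
      have h2 : |r₀⁻¹ • x j i| = r₀⁻¹ * |x j i| := by
        rw [smul_eq_mul, abs_mul, abs_of_nonneg (by positivity : (0:ℝ) ≤ r₀⁻¹)]
      calc |(r₀⁻¹ • x j) i| = r₀⁻¹ * |x j i| := by
            simpa using h2
        _ ≤ r₀⁻¹ * y i := by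
            apply mul_le_mul_of_nonneg_left h1 (by positivity)
        _ = θ₀ i := by rw [← hθ₀i i]; field_simp
        _ ≤ |θ₀ i| := le_abs_self _
    have hstep : ∀ ε : ℝ, 0 < ε →
        gauge K y ≤ Real.sqrt (∑ j, (gauge K (x j) + ε) ^ 2) := by
      intro ε hε
      apply key_ineq hconv horth hquad hm x (fun j => gauge K (x j) + ε)
        (fun j => by have := gauge_nonneg (s := K) (x j); positivity)
      intro j
      have hset : Set.Nonempty {r : ℝ | 0 < r ∧ x j ∈ r • K} := ⟨r₀, hr₀, hxj j⟩
      have hlt : sInf {r : ℝ | 0 < r ∧ x j ∈ r • K} < gauge K (x j) + ε :=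
        lt_add_of_le_of_pos (le_of_eq rfl) hε
      obtain ⟨r', hr', hr'lt⟩ := exists_lt_of_csInf_lt hset hlt
      exact mem_smul_mono hconv h0K hr'.1 hr'lt.le hr'.2
    -- take the limit ε → 0⁺
    have hcont : Continuous fun ε : ℝ => Real.sqrt (∑ j, (gauge K (x j) + ε) ^ 2) := by
      apply Real.continuous_sqrt.comp
      exact continuous_finset_sum _ fun j _ => by continuity
    have htend : Filter.Tendsto (fun ε : ℝ => Real.sqrt (∑ j, (gauge K (x j) + ε) ^ 2))
        (nhdsWithin 0 (Set.Ioi 0)) (nhds (Real.sqrt (∑ j, gauge K (x j) ^ 2))) := by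
      have h := (hcont.tendsto 0).mono_left
        (nhdsWithin_le_nhds (s := Set.Ioi (0:ℝ)))
      simpa using h
    refine ge_of_tendsto htend ?_
    filter_upwards [self_mem_nhdsWithin] with ε hε
    exact hstep ε hε
  · have hempty : {r : ℝ | 0 < r ∧ y ∈ r • K} = ∅ := by
      ext r
      simp only [Set.mem_setOf_eq, Set.mem_empty_iff_false, iff_false]
      rintro ⟨h1, h2⟩
      exact hyne ⟨r, h1, h2⟩
    show gauge K y ≤ _
    unfold gauge
    rw [hempty, Real.sInf_empty]
    positivity
end
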